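/- arXiv:1012.1418 — 3 statements merged into one kernel-verified Lean document; each statement's English description precedes it below -/
import Mathlib

section
/- Define on E = Λ^• (ℝ^{2l})* ⊗ S the operators F^+(α ⊗ s) = (i/2) Σ_k ε^k ∧ α ⊗ e_k·s and F^-(α ⊗ s) = (1/2) Σ_{j,k} ω^{jk} ι_{e_j} α ⊗ e_k·s, and set E^- := -2{F^-, F^-} = -4 F^- F^-. Then for any α ⊗ s ∈ Λ^r (ℝ^{2l})* ⊗ S, E^-(α ⊗ s) = (i/2) Σ_{j,k} ω^{jk} ι_{e_j} ι_{e_k} α ⊗ s; in particular E^- acts only on the form part. -/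
open ExteriorAlgebra TensorProduct MvPolynomial

set_option maxHeartbeats 1000000

noncomputable section

/-- Index set for a symplectic basis of `ℝ^{2l}`: `inl i = e_i`, `inr i = e_{i+l}`. -/
abbrev Idx (l : ℕ) := Fin l ⊕ Fin l

/-- Coefficients `ω_{jk} = ω₀(e_j, e_k)` of the standard symplectic form;
with the convention `ω_{jk} ω^{ik} = δ_j^i` one also has `ω^{jk} = ω_{jk}`. -/
def omg (l : ℕ) : Idx l → Idx l → ℝ
  | Sum.inl a, Sum.inr b => if a = b then 1 else 0
  | Sum.inr a, Sum.inl b => if a = b then -1 else 0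
  | Sum.inl _, Sum.inl _ => 0
  | Sum.inr _, Sum.inr _ => 0

/-- The standard symplectic form `ω₀` on `ℝ^{2l}`. -/
def omega0 (l : ℕ) (v w : Idx l → ℝ) : ℝ := ∑ j, ∑ k, omg l j k * v j * w k

/-- The space `Λ^•(ℝ^{2l})^*` of complex(ified) exterior forms, modelled as the
exterior algebra on the span of the dual basis `{ε^k}`. -/
abbrev Forms (l : ℕ) := ExteriorAlgebra ℂ (Idx l → ℂ)

/-- The dual basis vector `ε^k` as a 1-form. -/
def eps (l : ℕ) (k : Idx l) : Forms l := ExteriorAlgebra.ι ℂ (Pi.single k 1)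

/-- Contraction `ι_{e_j}` of exterior forms by the basis vector `e_j`. -/
def ctr (l : ℕ) (j : Idx l) : Forms l →ₗ[ℂ] Forms l :=
  CliffordAlgebra.contractLeft (LinearMap.proj j)

/-- Contraction `ι_v` by a real vector `v ∈ ℝ^{2l}`. -/
def ctrV (l : ℕ) (v : Idx l → ℝ) : Forms l →ₗ[ℂ] Forms l :=
  ∑ j, (v j : ℂ) • ctr l j

section S
variable {l : ℕ} {S : Type*} [AddCommGroup S] [Module ℂ S]

/-- Clifford multiplication by a real vector `v`, extended from its values
`c k` on the symplectic basis vectors. -/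
def clV (l : ℕ) (c : Idx l → S →ₗ[ℂ] S) (v : Idx l → ℝ) : S →ₗ[ℂ] S :=
  ∑ k, (v k : ℂ) • c k

/-- The operator `F⁺(α ⊗ s) = (i/2) Σ_k ε^k ∧ α ⊗ e_k·s` on `Λ^• ⊗ S`. -/
def Fp (l : ℕ) (c : Idx l → S →ₗ[ℂ] S) : Forms l ⊗[ℂ] S →ₗ[ℂ] Forms l ⊗[ℂ] S :=
  (Complex.I / 2) • ∑ k, TensorProduct.map (LinearMap.mulLeft ℂ (eps l k)) (c k)

/-- The operator `F⁻(α ⊗ s) = (1/2) Σ_{j,k} ω^{jk} ι_{e_j} α ⊗ e_k·s` on `Λ^• ⊗ S`. -/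
def Fm (l : ℕ) (c : Idx l → S →ₗ[ℂ] S) : Forms l ⊗[ℂ] S →ₗ[ℂ] Forms l ⊗[ℂ] S :=
  (1 / 2 : ℂ) • ∑ j, ∑ k, (omg l j k : ℂ) • TensorProduct.map (ctr l j) (c k)

end S

/-- The concrete symplectic Clifford multiplication on `S = ℂ[x^1,…,x^l]`:
`e_i · s = i x^i s` and `e_{i+l} · s = ∂s/∂x^i`. -/
def cPoly (l : ℕ) : Idx l → MvPolynomial (Fin l) ℂ →ₗ[ℂ] MvPolynomial (Fin l) ℂ
  | Sum.inl i => Complex.I • LinearMap.mulLeft ℂ (X i)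
  | Sum.inr i => (pderiv i).toLinearMap

section Aux

lemma aux_ctr_anticomm (l : ℕ) (j p : Idx l) (x : Forms l) :
    ctr l j (ctr l p x) = - ctr l p (ctr l j x) := by
  unfold ctr; exact CliffordAlgebra.contractLeft_comm _ _ x

lemma aux_omg_sum (l : ℕ) (p j : Idx l) :
    ∑ k, ∑ q, (omg l p q : ℂ) * omg l j k * omg l q k = omg l p j := by
  rcases p with a | a <;> rcases j with b | b <;>
    simp [omg, Fintype.sum_sum_type, Finset.sum_ite_eq, ite_and, mul_ite,
      apply_ite, Finset.sum_ite_eq'] <;>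
    (try (split_ifs with h
          · exact h.symm
          · exact fun hh => h hh.symm))

lemma aux_sum4_swap {M : Type*} [AddCommMonoid M] {ι : Type*} [Fintype ι]
    (f : ι → ι → ι → ι → M) :
    ∑ p, ∑ q, ∑ j, ∑ k, f p q j k = ∑ p, ∑ q, ∑ j, ∑ k, f j k p q := by
  have h : (∑ a : ι × ι, ∑ b : ι × ι, f a.1 a.2 b.1 b.2)
      = ∑ a : ι × ι, ∑ b : ι × ι, f b.1 b.2 a.1 a.2 := Finset.sum_comm
  simpa [Fintype.sum_prod_type] using h

lemma aux_Fm_tmul {l : ℕ} {S : Type*} [AddCommGroup S] [Module ℂ S]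
    (c : Idx l → S →ₗ[ℂ] S) (x : Forms l) (t : S) : Fm l c (x ⊗ₜ[ℂ] t)
      = ∑ j, ∑ k, ((1/2 : ℂ) * (omg l j k : ℂ)) • (ctr l j x ⊗ₜ[ℂ] c k t) := by
  simp [Fm, Finset.smul_sum, smul_smul]

lemma aux_quad {l : ℕ} {S : Type*} [AddCommGroup S] [Module ℂ S]
    (c : Idx l → S →ₗ[ℂ] S) (α : Forms l) (s : S) :
    ((-4 : ℂ) • (Fm l c ∘ₗ Fm l c)) (α ⊗ₜ[ℂ] s)
      = (-1 : ℂ) • ∑ j, ∑ k, ∑ p, ∑ q, ((omg l p q : ℂ) * (omg l j k : ℂ)) •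
          (ctr l p (ctr l j α) ⊗ₜ[ℂ] c q (c k s)) := by
  rw [LinearMap.smul_apply, LinearMap.comp_apply, aux_Fm_tmul]
  simp only [map_sum, map_smul, aux_Fm_tmul]
  simp only [Finset.smul_sum, smul_smul]
  refine Finset.sum_congr rfl fun j _ => Finset.sum_congr rfl fun k _ =>
    Finset.sum_congr rfl fun p _ => Finset.sum_congr rfl fun q _ => ?_
  congr 1
  ring

lemma aux_two_smul_quad {l : ℕ} {S : Type*} [AddCommGroup S] [Module ℂ S]
    (c : Idx l → S →ₗ[ℂ] S)
    (hc : ∀ (j k : Idx l) (s : S),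
      c j (c k s) - c k (c j s) = (-Complex.I * (omg l j k : ℂ)) • s)
    (α : Forms l) (s : S) :
    (2 : ℂ) • (∑ j, ∑ k, ∑ p, ∑ q, ((omg l p q : ℂ) * (omg l j k : ℂ)) •
          (ctr l p (ctr l j α) ⊗ₜ[ℂ] c q (c k s)))
      = ∑ j, ∑ p, (-Complex.I * (omg l p j : ℂ)) • (ctr l p (ctr l j α) ⊗ₜ[ℂ] s) := by
  calc (2 : ℂ) • (∑ j, ∑ k, ∑ p, ∑ q, ((omg l p q : ℂ) * (omg l j k : ℂ)) •
          (ctr l p (ctr l j α) ⊗ₜ[ℂ] c q (c k s)))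
      = (∑ j, ∑ k, ∑ p, ∑ q, ((omg l p q : ℂ) * (omg l j k : ℂ)) •
          (ctr l p (ctr l j α) ⊗ₜ[ℂ] c q (c k s)))
        + ∑ j, ∑ k, ∑ p, ∑ q, ((omg l j k : ℂ) * (omg l p q : ℂ)) •
          (ctr l j (ctr l p α) ⊗ₜ[ℂ] c k (c q s)) := by
        rw [two_smul]
        congr 1
        exact aux_sum4_swap (fun j k p q => ((omg l p q : ℂ) * (omg l j k : ℂ)) •
          (ctr l p (ctr l j α) ⊗ₜ[ℂ] c q (c k s)))
    _ = ∑ j, ∑ k, ∑ p, ∑ q, (-Complex.I * ((omg l p q : ℂ) * omg l j k * omg l q k)) •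
          (ctr l p (ctr l j α) ⊗ₜ[ℂ] s) := by
        simp only [← Finset.sum_add_distrib]
        refine Finset.sum_congr rfl fun j _ => Finset.sum_congr rfl fun k _ =>
          Finset.sum_congr rfl fun p _ => Finset.sum_congr rfl fun q _ => ?_
        rw [aux_ctr_anticomm l j p α,
          show c k (c q s) = c q (c k s) - (-Complex.I * (omg l q k : ℂ)) • s from by
            rw [← hc q k s]; abel]
        simp only [tmul_sub, tmul_smul, neg_tmul]
        module
    _ = ∑ j, ∑ p, (-Complex.I * (omg l p j : ℂ)) • (ctr l p (ctr l j α) ⊗ₜ[ℂ] s) := by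
        refine Finset.sum_congr rfl fun j _ => ?_
        rw [Finset.sum_comm]
        refine Finset.sum_congr rfl fun p _ => ?_
        simp only [smul_smul, ← Finset.sum_smul]
        congr 1
        rw [← aux_omg_sum l p j]
        simp only [Finset.mul_sum]

end Aux

/-- With `E⁻ := -2{F⁻,F⁻} = -4 F⁻F⁻`, one has
`E⁻(α ⊗ s) = (i/2) Σ_{j,k} ω^{jk} ι_{e_j} ι_{e_k} α ⊗ s`; in particular `E⁻`
acts only on the form part. Here `S` is any symplectic Clifford module,
i.e. `c` satisfies `v·w·s − w·v·s = −i ω₀(v,w) s` on basis vectors. -/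
theorem Eminus_acts_on_form_part (l : ℕ) {S : Type*} [AddCommGroup S] [Module ℂ S]
    (c : Idx l → S →ₗ[ℂ] S)
    (hc : ∀ (j k : Idx l) (s : S),
      c j (c k s) - c k (c j s) = (-Complex.I * (omg l j k : ℂ)) • s)
    (r : ℕ) (α : Forms l) (hα : α ∈ ⋀[ℂ]^r (Idx l → ℂ)) (s : S) :
    ((-4 : ℂ) • (Fm l c ∘ₗ Fm l c)) (α ⊗ₜ[ℂ] s)
      = (((Complex.I / 2) • ∑ j, ∑ k, (omg l j k : ℂ) • (ctr l j ∘ₗ ctr l k)) α)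
          ⊗ₜ[ℂ] s := by
  rw [aux_quad c α s]
  have hQ : (∑ j, ∑ k, ∑ p, ∑ q, ((omg l p q : ℂ) * (omg l j k : ℂ)) •
        (ctr l p (ctr l j α) ⊗ₜ[ℂ] c q (c k s)))
      = (2⁻¹ : ℂ) • ∑ j, ∑ p, (-Complex.I * (omg l p j : ℂ)) •
          (ctr l p (ctr l j α) ⊗ₜ[ℂ] s) := by
    rw [← aux_two_smul_quad c hc α s, smul_smul]
    norm_num
  rw [hQ]
  simp only [LinearMap.smul_apply, LinearMap.sum_apply, LinearMap.coe_comp,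
    Function.comp_apply, smul_tmul', sum_tmul, Finset.smul_sum, smul_smul]
  rw [Finset.sum_comm]
  refine Finset.sum_congr rfl fun j _ => Finset.sum_congr rfl fun k _ => ?_
  congr 1
  ring

end
end

section
/- With F^- defined by F^-(α ⊗ s) = (1/2) Σ_{j,k} ω^{jk} ι_{e_j}α ⊗ e_k·s, for every v ∈ ℝ^{2l} and α ⊗ s ∈ Λ^•(ℝ^{2l})* ⊗ S the commutator identity [F^-, v·](α ⊗ s) = (i/2) ι_v α ⊗ s holds, where v· denotes the operator α ⊗ s ↦ α ⊗ v·s. -/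
open ExteriorAlgebra TensorProduct MvPolynomial

noncomputable section

/-- Commutator identity `[F⁻, v·](α ⊗ s) = (i/2) ι_v α ⊗ s` for every
`v ∈ ℝ^{2l}` and `α ⊗ s ∈ Λ^•(ℝ^{2l})* ⊗ S`, where `v·` denotes the operator
`α ⊗ s ↦ α ⊗ v·s` and `S` is a symplectic Clifford module. -/
theorem commutator_Fm_clifford (l : ℕ) {S : Type*} [AddCommGroup S] [Module ℂ S]
    (c : Idx l → S →ₗ[ℂ] S)
    (hc : ∀ (j k : Idx l) (s : S),
      c j (c k s) - c k (c j s) = (-Complex.I * (omg l j k : ℂ)) • s)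
    (v : Idx l → ℝ) (α : Forms l) (s : S) :
    Fm l c (α ⊗ₜ[ℂ] clV l c v s)
      - TensorProduct.map LinearMap.id (clV l c v) (Fm l c (α ⊗ₜ[ℂ] s))
      = (Complex.I / 2) • ((ctrV l v α) ⊗ₜ[ℂ] s) := by
  have hkey : ∀ k : Idx l, c k (clV l c v s) - clV l c v (c k s)
      = (∑ m, (-Complex.I * (omg l k m : ℂ) * (v m : ℂ))) • s := by
    intro k
    simp only [clV, LinearMap.sum_apply, LinearMap.smul_apply, map_sum, map_smul]
    rw [← Finset.sum_sub_distrib, Finset.sum_smul]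
    refine Finset.sum_congr rfl fun m _ => ?_
    rw [← smul_sub, hc k m s, smul_smul, mul_comm]
  have homg : ∀ j : Idx l,
      (∑ k, (omg l j k : ℂ) * (∑ m, (-Complex.I * (omg l k m : ℂ) * (v m : ℂ))))
        = Complex.I * (v j : ℂ) := by
    intro j
    cases j with
    | inl a =>
      simp [omg, Fintype.sum_sum_type, Finset.sum_ite_eq', ite_mul, mul_ite,
        Finset.mul_sum, apply_ite, mul_comm]
    | inr a =>
      simp [omg, Fintype.sum_sum_type, Finset.sum_ite_eq', ite_mul, mul_ite,
        Finset.mul_sum, apply_ite, mul_comm]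
  simp only [Fm, LinearMap.smul_apply, LinearMap.sum_apply, TensorProduct.map_tmul,
    map_smul, map_sum, LinearMap.id_coe, id_eq]
  rw [← smul_sub, ← Finset.sum_sub_distrib]
  simp only [ctrV, LinearMap.sum_apply, LinearMap.smul_apply, TensorProduct.sum_tmul,
    TensorProduct.smul_tmul', Finset.smul_sum]
  refine Finset.sum_congr rfl fun j _ => ?_
  rw [← Finset.sum_sub_distrib]
  have : ∀ k : Idx l,
      ((omg l j k : ℂ) • ctr l j α) ⊗ₜ[ℂ] c k (clV l c v s)
      - ((omg l j k : ℂ) • ctr l j α) ⊗ₜ[ℂ] clV l c v (c k s)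
      = ((omg l j k : ℂ) * (∑ m, (-Complex.I * (omg l k m : ℂ) * (v m : ℂ))))
          • (ctr l j α ⊗ₜ[ℂ] s) := by
    intro k
    rw [← TensorProduct.tmul_sub, hkey k, TensorProduct.tmul_smul,
      TensorProduct.smul_tmul', smul_smul, mul_comm, TensorProduct.smul_tmul']
  rw [Finset.sum_congr rfl fun k _ => this k, ← Finset.sum_smul, homg j]
  simp only [TensorProduct.smul_tmul', smul_smul]
  congr 1
  ring

end
end

section
/- Define H := 2{F^+, F^-} on E = Λ^•(ℝ^{2l})* ⊗ S, with F^± as above. Then H acts on Λ^r(ℝ^{2l})* ⊗ S as the scalar (1/2)(r − l), i.e., H(α ⊗ s) = (1/2)(r − l)(α ⊗ s) for every α ∈ Λ^r(ℝ^{2l})* and s ∈ S. -/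
open ExteriorAlgebra TensorProduct MvPolynomial

noncomputable section

/-!
Expanding `F⁺F⁻ + F⁻F⁺` in components, the anticommutation rule
`ι_{e_j}(ε^k ∧ β) + ε^k ∧ ι_{e_j}β = δ_j^k β` together with the Clifford relations
`e_j·e_k·s − e_k·e_j·s = −i ω_{jk} s` leaves two scalar terms: the Euler operator
`Σ_j ε^j ∧ ι_{e_j}`, which is `r` on `r`-forms, and `Σ_{j,k} ω^{jk} e_k·e_j`, which is `i l`.
Hence `{F⁺, F⁻} = (i/4)(−i r + i l) = (r − l)/4` for every symplectic Clifford module; on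
`ℂ[x^1,…,x^l]` the Clifford relations are the Heisenberg relations `[∂/∂x^k, x^k] = 1`.
-/

theorem MvPolynomial.pderiv_comm {R σ : Type*} [CommSemiring R] (i j : σ)
    (p : MvPolynomial σ R) :
    pderiv i (pderiv j p) = pderiv j (pderiv i p) := by
  classical
  induction p using MvPolynomial.induction_on with
  | C c => simp
  | add p q hp hq => simp only [map_add, hp, hq]
  | mul_X p k hp =>
    have hX : ∀ a b : σ, pderiv a (pderiv b (X k : MvPolynomial σ R)) = 0 := fun a b => by
      simp [pderiv_X, Pi.single_apply, apply_ite]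
    simp only [Derivation.leibniz, map_add, smul_eq_mul, hp, hX]
    ring

namespace ExteriorAlgebra

variable {R n : Type*} [CommRing R]

theorem contractLeft_proj_ι_mul (j : n) (v : n → R) (x : ExteriorAlgebra R (n → R)) :
    CliffordAlgebra.contractLeft (LinearMap.proj j) (ι R v * x)
      = v j • x - ι R v * CliffordAlgebra.contractLeft (LinearMap.proj j) x :=
  CliffordAlgebra.contractLeft_ι_mul _ _ _

variable [Fintype n] [DecidableEq n]

theorem ι_eq_sum_smul_ι_single (v : n → R) :
    ι R v = ∑ j, v j • ι R (Pi.single j 1) := by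
  conv_lhs => rw [pi_eq_sum_univ' v]
  simp only [map_sum, map_smul]

theorem sum_ι_single_mul_contractLeft_proj {r : ℕ} {x : ExteriorAlgebra R (n → R)}
    (hx : x ∈ ⋀[R]^r (n → R)) :
    ∑ j, ι R (Pi.single j 1) * CliffordAlgebra.contractLeft (LinearMap.proj j) x = r • x := by
  induction hx using Submodule.pow_induction_on_left' with
  | algebraMap c => simp [CliffordAlgebra.contractLeft_algebraMap]
  | add x y i _ _ hx hy => simp only [map_add, mul_add, Finset.sum_add_distrib, hx, hy, smul_add]
  | mem_mul m hm i x _ ih =>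
    obtain ⟨v, rfl⟩ := hm
    have anticomm : ∀ j, ι R (Pi.single j 1) * ι R v = -(ι R v * ι R (Pi.single j 1)) :=
      fun j => eq_neg_of_add_eq_zero_left (ι_add_mul_swap _ v)
    calc ∑ j, ι R (Pi.single j 1) * CliffordAlgebra.contractLeft (LinearMap.proj j) (ι R v * x)
        = ∑ j, v j • ι R (Pi.single j 1) * x
          + ι R v *
            ∑ j, ι R (Pi.single j 1) * CliffordAlgebra.contractLeft (LinearMap.proj j) x := by
          simp only [contractLeft_proj_ι_mul, mul_sub, mul_smul_comm, ← mul_assoc, anticomm,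
            neg_mul, sub_neg_eq_add, Finset.sum_add_distrib, Finset.mul_sum,
            smul_mul_assoc]
      _ = (i + 1) • (ι R v * x) := by
          rw [← Finset.sum_mul, ← ι_eq_sum_smul_ι_single, ih, mul_smul_comm, add_smul, one_smul,
            add_comm]

end ExteriorAlgebra

theorem ctr_eps_mul {l : ℕ} (j k : Idx l) (β : Forms l) :
    ctr l j (eps l k * β) = (if k = j then (1 : ℂ) else 0) • β - eps l k * ctr l j β := by
  rw [ctr, eps, ExteriorAlgebra.contractLeft_proj_ι_mul]
  simp [Pi.single_apply, eq_comm]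

theorem sum_eps_mul_ctr {l r : ℕ} {α : Forms l} (hα : α ∈ ⋀[ℂ]^r (Idx l → ℂ)) :
    ∑ j, eps l j * ctr l j α = (r : ℂ) • α := by
  rw [Nat.cast_smul_eq_nsmul]
  exact ExteriorAlgebra.sum_ι_single_mul_contractLeft_proj hα

section Symplectic

variable {l : ℕ}

theorem sum_omg_mul_omg (j k : Idx l) :
    ∑ i, omg l j i * omg l k i = if j = k then 1 else 0 := by
  rcases j with a | a <;> rcases k with b | b <;>
    simp [omg, Fintype.sum_sum_type, Finset.sum_ite_eq, eq_comm, apply_ite]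

variable {S : Type*} [AddCommGroup S] [Module ℂ S]

def IsSymplecticCliffordMul (c : Idx l → S →ₗ[ℂ] S) : Prop :=
  ∀ j k s, c j (c k s) - c k (c j s) = (-Complex.I * omg l j k) • s

theorem IsSymplecticCliffordMul.sum_omg_smul {c : Idx l → S →ₗ[ℂ] S}
    (hc : IsSymplecticCliffordMul c) (s : S) :
    ∑ j, ∑ k, (omg l j k : ℂ) • c k (c j s) = ((l : ℂ) * Complex.I) • s := by
  have bracket : ∀ a, c (.inr a) (c (.inl a) s) - c (.inl a) (c (.inr a) s) = Complex.I • s := by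
    intro a; rw [hc]; simp [omg]
  simp only [omg, Complex.coe_smul, Fintype.sum_sum_type, zero_smul, Finset.sum_const_zero,
    ite_smul, one_smul, Finset.sum_ite_eq, Finset.mem_univ, ↓reduceIte, zero_add, neg_smul,
    add_zero, Finset.sum_neg_distrib, ← sub_eq_add_neg]
  rw [← Finset.sum_sub_distrib]
  simp only [bracket, Finset.sum_const, Finset.card_univ, Fintype.card_fin, ← Nat.cast_smul_eq_nsmul ℂ,
    smul_smul]

end Symplectic

theorem isSymplecticCliffordMul_cPoly (l : ℕ) : IsSymplecticCliffordMul (cPoly l) := by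
  rintro (a | a) (b | b) s <;> obtain rfl | h := eq_or_ne a b <;>
    simp [cPoly, omg, MvPolynomial.pderiv_comm, smul_smul, mul_left_comm, *]

section Operators

variable {l : ℕ} {S : Type*} [AddCommGroup S] [Module ℂ S] (c : Idx l → S →ₗ[ℂ] S)

theorem Fp_tmul (β : Forms l) (t : S) :
    Fp l c (β ⊗ₜ t) = (Complex.I / 2) • ∑ k, (eps l k * β) ⊗ₜ c k t := by
  simp [Fp, LinearMap.sum_apply]

theorem Fm_tmul (β : Forms l) (t : S) :
    Fm l c (β ⊗ₜ t) = (1 / 2 : ℂ) • ∑ j, ∑ k, (omg l j k : ℂ) • (ctr l j β ⊗ₜ c k t) := by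
  simp only [Fm, LinearMap.smul_apply, LinearMap.sum_apply, TensorProduct.map_tmul]

theorem Fp_Fm_tmul (α : Forms l) (s : S) :
    Fp l c (Fm l c (α ⊗ₜ s)) = (Complex.I / 4) •
      ∑ j, ∑ k, ∑ k', (omg l j k : ℂ) • ((eps l k' * ctr l j α) ⊗ₜ c k' (c k s)) := by
  simp only [Fm_tmul, Fp_tmul, map_smul, map_sum, Finset.smul_sum, smul_smul]
  refine Finset.sum_congr rfl fun j _ => Finset.sum_congr rfl fun k _ =>
    Finset.sum_congr rfl fun k' _ => ?_
  match_scalars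
  ring

theorem Fm_Fp_tmul (α : Forms l) (s : S) :
    Fm l c (Fp l c (α ⊗ₜ s)) = (Complex.I / 4) •
      ∑ j, ∑ k, ∑ k', (omg l j k : ℂ) • (ctr l j (eps l k' * α) ⊗ₜ c k (c k' s)) := by
  simp only [Fm_tmul, Fp_tmul, map_smul, map_sum, Finset.smul_sum, smul_smul]
  rw [Finset.sum_comm]
  refine Finset.sum_congr rfl fun j _ => ?_
  rw [Finset.sum_comm]
  refine Finset.sum_congr rfl fun k _ => Finset.sum_congr rfl fun k' _ => ?_
  match_scalars
  ring

end Operators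

theorem IsSymplecticCliffordMul.Fp_Fm_add_Fm_Fp_tmul {l r : ℕ} {S : Type*} [AddCommGroup S]
    [Module ℂ S] {c : Idx l → S →ₗ[ℂ] S} (hc : IsSymplecticCliffordMul c) {α : Forms l}
    (hα : α ∈ ⋀[ℂ]^r (Idx l → ℂ)) (s : S) :
    Fp l c (Fm l c (α ⊗ₜ[ℂ] s)) + Fm l c (Fp l c (α ⊗ₜ[ℂ] s))
      = (((r : ℂ) - l) / 4) • (α ⊗ₜ[ℂ] s) := by
  have summand : ∀ j k k' : Idx l,
      (omg l j k : ℂ) • ((eps l k' * ctr l j α) ⊗ₜ[ℂ] c k' (c k s))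
        + (omg l j k : ℂ) • (ctr l j (eps l k' * α) ⊗ₜ[ℂ] c k (c k' s))
      = (-Complex.I * (omg l j k * omg l k' k : ℝ)) • ((eps l k' * ctr l j α) ⊗ₜ[ℂ] s)
        + (if k' = j then (omg l j k : ℂ) • (α ⊗ₜ[ℂ] c k (c k' s)) else 0) := by
    intro j k k'
    have hck := hc k' k s
    rw [sub_eq_iff_eq_add] at hck
    rw [ctr_eps_mul, hck]
    split_ifs <;>
      simp only [one_smul, zero_smul, zero_tmul, sub_tmul, tmul_add, tmul_smul] <;>
      push_cast <;> module
  have euler : ∑ j, ∑ k, ∑ k', (-Complex.I * (omg l j k * omg l k' k : ℝ)) •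
      ((eps l k' * ctr l j α) ⊗ₜ[ℂ] s) = (-Complex.I * r) • (α ⊗ₜ[ℂ] s) := by
    have diagonal : ∀ j, ∑ k, ∑ k', (-Complex.I * (omg l j k * omg l k' k : ℝ)) •
        ((eps l k' * ctr l j α) ⊗ₜ[ℂ] s) = -Complex.I • ((eps l j * ctr l j α) ⊗ₜ[ℂ] s) := by
      intro j
      rw [Finset.sum_comm]
      simp only [← Finset.sum_smul, ← Finset.mul_sum, ← Complex.ofReal_sum, sum_omg_mul_omg]
      simp only [apply_ite Complex.ofReal, Complex.ofReal_one, Complex.ofReal_zero, mul_ite,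
        mul_one, mul_zero, ite_smul, zero_smul, Finset.sum_ite_eq, Finset.mem_univ, if_true]
    rw [Fintype.sum_congr _ _ diagonal, ← Finset.smul_sum, ← sum_tmul, sum_eps_mul_ctr hα,
      ← smul_tmul', smul_smul]
  have casimir :
      ∑ j, ∑ k, ∑ k', (if k' = j then (omg l j k : ℂ) • (α ⊗ₜ[ℂ] c k (c k' s)) else 0)
        = ((l : ℂ) * Complex.I) • (α ⊗ₜ[ℂ] s) := by
    simp only [Finset.sum_ite_eq', Finset.mem_univ, if_true, ← tmul_smul, ← tmul_sum,
      hc.sum_omg_smul]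
  rw [Fp_Fm_tmul, Fm_Fp_tmul, ← smul_add]
  simp only [← Finset.sum_add_distrib, summand]
  simp only [Finset.sum_add_distrib, euler, casimir]
  match_scalars
  linear_combination (((l : ℂ) - r) / 4) * Complex.I_mul_I

/-- `H := 2{F⁺,F⁻}` acts on `Λ^r(ℝ^{2l})* ⊗ S` as the scalar `(1/2)(r − l)`,
for `S = ℂ[x^1,…,x^l]` with the standard symplectic Clifford multiplication. -/
theorem H_is_scalar_on_degree_r (l r : ℕ) (α : Forms l)
    (hα : α ∈ ⋀[ℂ]^r (Idx l → ℂ)) (s : MvPolynomial (Fin l) ℂ) :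
    ((2 : ℂ) • (Fp l (cPoly l) ∘ₗ Fm l (cPoly l) + Fm l (cPoly l) ∘ₗ Fp l (cPoly l)))
        (α ⊗ₜ[ℂ] s)
      = (((r : ℂ) - (l : ℂ)) / 2) • (α ⊗ₜ[ℂ] s) := by
  rw [LinearMap.smul_apply, LinearMap.add_apply, LinearMap.comp_apply, LinearMap.comp_apply,
    (isSymplecticCliffordMul_cPoly l).Fp_Fm_add_Fm_Fp_tmul hα, smul_smul]
  congr 1
  ring

end
end
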